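/- Let p ≥ 0 be an integer and let κ* > 0 satisfy J_p(κ*) = 0 and J_p'(κ*) ≠ 0. Define, for κ in a punctured neighborhood of κ* on which J_p(κ) ≠ 0, the function g_p(κ) = κ·J_p'(κ)²·(κ − κ*)²/J_p(κ)². Then g_p(κ) → κ* as κ → κ*, and moreover lim_{κ→κ*} (g_p(κ) − κ*)/(κ − κ*)² = (−8·(κ*)² + 8·p² + 1)/(12·κ*); equivalently, the analytic extension of g_p to κ* has value κ*, first derivative 0, and second derivative (−8·(κ*)² + 8·p² + 1)/(6·κ*) at κ*. -/

import Mathlib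

open Complex Real Filter Set

/-- Bessel function of the first kind of integer order `p`. -/
noncomputable def besselJ (p : ℕ) (z : ℂ) : ℂ :=
  ∑' m : ℕ, ((-1 : ℂ) ^ m / ((Nat.factorial m : ℂ) * (Nat.factorial (m + p) : ℂ)))
    * (z / 2) ^ (2 * m + p)

/-- Derivative of the Bessel function. -/
noncomputable def besselJ' (p : ℕ) (z : ℂ) : ℂ := deriv (besselJ p) z

/-- The ITE determinant function `F_p(κ, n)`. -/
noncomputable def Fp (p : ℕ) (κ : ℂ) (n : ℝ) : ℂ :=
  κ * (besselJ' p κ * besselJ p ((Real.sqrt n : ℂ) * κ)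
    - (Real.sqrt n : ℂ) * besselJ p κ * besselJ' p ((Real.sqrt n : ℂ) * κ))

/-!
`J_p` is entire and solves Bessel's equation `z² J'' + z J' + (z² - p²) J = 0`. At a simple zero
`κ ≠ 0` this forces `κ J''(κ) = -J'(κ)` and `κ² J'''(κ) = (2 + p² - κ²) J'(κ)`. Writing
`J(z) = (z - κ) H(z)` with `H(κ) = J'(κ)`, one has `g_p = z J'² / H²`; expanding `J'` and `H` to
second order in `z - κ`, the first-order coefficient of `g_p - κ` vanishes by the first relation,
and the second-order one is evaluated with both.
-/

open Topology

noncomputable def besselCoeff (p m : ℕ) : ℂ :=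
  (-1) ^ m / ((Nat.factorial m : ℂ) * (Nat.factorial (m + p) : ℂ))

/-- The `k`-th derivative of the `m`-th term `besselCoeff p m * (z / 2) ^ (2 * m + p)` of the
series defining `besselJ p`. -/
noncomputable def besselTerm (p k m : ℕ) (z : ℂ) : ℂ :=
  besselCoeff p m * ((2 * m + p).descFactorial k / 2 ^ k) * (z / 2) ^ (2 * m + p - k)

lemma besselCoeff_succ_mul (p m : ℕ) :
    besselCoeff p (m + 1) * ((m + 1) * (m + 1 + p)) = -besselCoeff p m := by
  rw [besselCoeff, besselCoeff, show m + 1 + p = m + p + 1 by omega, Nat.factorial_succ,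
    Nat.factorial_succ]
  push_cast
  have hm1 : (m : ℂ) + 1 ≠ 0 := Nat.cast_add_one_ne_zero m
  have hmp1 : (m : ℂ) + p + 1 ≠ 0 := by exact_mod_cast Nat.succ_ne_zero (m + p)
  field_simp
  ring

lemma norm_besselCoeff_le (p m : ℕ) : ‖besselCoeff p m‖ ≤ 1 / m.factorial := by
  rw [besselCoeff, norm_div, norm_pow, norm_neg, norm_one, one_pow, norm_mul,
    Complex.norm_natCast, Complex.norm_natCast]
  gcongr
  exact le_mul_of_one_le_right (by positivity) (by exact_mod_cast (m + p).factorial_pos)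

lemma norm_besselTerm_le (p k m : ℕ) {z : ℂ} {R : ℝ} (hR : 1 ≤ R) (hz : ‖z‖ ≤ R) :
    ‖besselTerm p k m z‖ ≤ (2 ^ k * R) ^ (2 * m + p) / m.factorial := by
  set n := 2 * m + p
  have hdesc : ‖((n.descFactorial k : ℂ) / 2 ^ k)‖ ≤ (2 ^ k) ^ n := by
    rw [norm_div, Complex.norm_natCast, norm_pow, Complex.norm_ofNat]
    calc (n.descFactorial k : ℝ) / 2 ^ k ≤ n.descFactorial k :=
          div_le_self (by positivity) (one_le_pow₀ one_le_two)
      _ ≤ ((2 ^ n : ℕ) : ℝ) ^ k := by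
          exact_mod_cast (n.descFactorial_le_pow k).trans
            (Nat.pow_le_pow_left Nat.lt_two_pow_self.le k)
      _ = (2 ^ k) ^ n := by push_cast; rw [← pow_mul, ← pow_mul, mul_comm]
  have hpow : ‖(z / 2) ^ (n - k)‖ ≤ R ^ n := by
    rw [norm_pow, norm_div, Complex.norm_ofNat]
    calc (‖z‖ / 2) ^ (n - k) ≤ R ^ (n - k) :=
          pow_le_pow_left₀ (by positivity) (by linarith [norm_nonneg z]) _
      _ ≤ R ^ n := pow_le_pow_right₀ hR (Nat.sub_le n k)
  calc ‖besselTerm p k m z‖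
      = ‖besselCoeff p m‖ * ‖((n.descFactorial k : ℂ) / 2 ^ k)‖ * ‖(z / 2) ^ (n - k)‖ := by
        rw [besselTerm, norm_mul, norm_mul]
    _ ≤ 1 / m.factorial * (2 ^ k) ^ n * R ^ n := by
        gcongr
        exact norm_besselCoeff_le p m
    _ = (2 ^ k * R) ^ n / m.factorial := by rw [mul_pow]; ring

lemma summable_pow_two_mul_add_div_factorial (p : ℕ) (x : ℝ) :
    Summable fun m : ℕ => x ^ (2 * m + p) / m.factorial := by
  refine ((Real.summable_pow_div_factorial (x ^ 2)).mul_left (x ^ p)).congr fun m => ?_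
  rw [pow_add, pow_mul]
  ring

lemma summable_besselTerm (p k : ℕ) (z : ℂ) : Summable fun m => besselTerm p k m z :=
  .of_norm_bounded (summable_pow_two_mul_add_div_factorial p (2 ^ k * (‖z‖ + 1))) fun m =>
    norm_besselTerm_le p k m (by simp) (by simp)

lemma hasDerivAt_besselTerm (p k m : ℕ) (z : ℂ) :
    HasDerivAt (besselTerm p k m) (besselTerm p (k + 1) m z) z := by
  set n := 2 * m + p
  have hpow : HasDerivAt (fun y : ℂ => (y / 2) ^ (n - k))
      ((n - k : ℕ) * (z / 2) ^ (n - k - 1) / 2) z :=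
    ((hasDerivAt_pow _ _).comp z ((hasDerivAt_id z).div_const 2)).congr_deriv (by simp; ring)
  refine (hpow.const_mul (besselCoeff p m * (n.descFactorial k / 2 ^ k))).congr_deriv ?_
  rw [besselTerm, Nat.descFactorial_succ, Nat.sub_sub]
  push_cast
  ring

lemma hasDerivAt_tsum_besselTerm (p k : ℕ) (z : ℂ) :
    HasDerivAt (fun y => ∑' m, besselTerm p k m y) (∑' m, besselTerm p (k + 1) m z) z := by
  set R := ‖z‖ + 1
  exact hasDerivAt_tsum_of_isPreconnected
    (summable_pow_two_mul_add_div_factorial p (2 ^ (k + 1) * R)) Metric.isOpen_ball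
    (convex_ball 0 R).isPreconnected
    (fun m y _ => hasDerivAt_besselTerm p k m y)
    (fun m y hy => norm_besselTerm_le p (k + 1) m (by simp [R]) (mem_ball_zero_iff.mp hy).le)
    (Metric.mem_ball_self (by positivity)) (summable_besselTerm p k 0)
    (by simp [R])

lemma pow_mul_besselTerm (p k m : ℕ) (z : ℂ) :
    z ^ k * besselTerm p k m z =
      besselCoeff p m * (2 * m + p).descFactorial k * (z / 2) ^ (2 * m + p) := by
  rcases le_or_gt k (2 * m + p) with hk | hk
  · rw [besselTerm, ← pow_sub_mul_pow _ hk, div_pow z 2 k]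
    field_simp
  · simp [besselTerm, Nat.descFactorial_eq_zero_iff_lt.mpr hk]

lemma besselTerm_residual (p m : ℕ) (z : ℂ) :
    z ^ 2 * besselTerm p 2 m z + z * besselTerm p 1 m z - (p : ℂ) ^ 2 * besselTerm p 0 m z =
      4 * (m * (m + p)) * besselCoeff p m * (z / 2) ^ (2 * m + p) := by
  have h1 := pow_mul_besselTerm p 1 m z
  have h2 := pow_mul_besselTerm p 2 m z
  simp only [pow_one, Nat.descFactorial_one, Nat.cast_descFactorial_two] at h1 h2
  rw [h1, h2]
  simp only [besselTerm, Nat.descFactorial_zero, pow_zero, Nat.sub_zero]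
  push_cast
  ring

lemma besselJ_eq_tsum (p : ℕ) : besselJ p = fun z => ∑' m, besselTerm p 0 m z := by
  funext z
  simp [besselJ, besselTerm, besselCoeff]

lemma deriv_besselJ (p : ℕ) : deriv (besselJ p) = fun z => ∑' m, besselTerm p 1 m z := by
  funext z
  rw [besselJ_eq_tsum]
  exact (hasDerivAt_tsum_besselTerm p 0 z).deriv

lemma deriv_deriv_besselJ (p : ℕ) :
    deriv (deriv (besselJ p)) = fun z => ∑' m, besselTerm p 2 m z := by
  funext z
  rw [deriv_besselJ]
  exact (hasDerivAt_tsum_besselTerm p 1 z).deriv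

lemma differentiable_besselJ (p : ℕ) : Differentiable ℂ (besselJ p) := by
  rw [besselJ_eq_tsum]
  exact fun z => (hasDerivAt_tsum_besselTerm p 0 z).differentiableAt

lemma besselJ_ode (p : ℕ) (z : ℂ) :
    z ^ 2 * deriv (deriv (besselJ p)) z + z * deriv (besselJ p) z
      + (z ^ 2 - (p : ℂ) ^ 2) * besselJ p z = 0 := by
  set T := fun k m => besselTerm p k m z
  have hT2 := (summable_besselTerm p 2 z).mul_left (z ^ 2)
  have hT1 := (summable_besselTerm p 1 z).mul_left z
  have hT0 := (summable_besselTerm p 0 z).mul_left ((p : ℂ) ^ 2)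
  have hsucc : ∀ m, z ^ 2 * T 2 (m + 1) + z * T 1 (m + 1) - (p : ℂ) ^ 2 * T 0 (m + 1)
      = -(z ^ 2 * T 0 m) := by
    intro m
    simp only [T, besselTerm_residual, show 2 * (m + 1) + p = 2 * m + p + 2 by ring, pow_add]
    simp only [besselTerm, Nat.descFactorial_zero, pow_zero, Nat.sub_zero]
    push_cast
    linear_combination (4 * (z / 2) ^ (2 * m + p) * (z / 2) ^ 2) * besselCoeff_succ_mul p m
  have htel : ∑' m, (z ^ 2 * T 2 m + z * T 1 m - (p : ℂ) ^ 2 * T 0 m)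
      = -(z ^ 2 * ∑' m, T 0 m) := by
    rw [((hT2.add hT1).sub hT0).tsum_eq_zero_add, tsum_congr hsucc, tsum_neg, tsum_mul_left]
    simp [T, besselTerm_residual]
  rw [(hT2.add hT1).tsum_sub hT0, hT2.tsum_add hT1, tsum_mul_left, tsum_mul_left,
    tsum_mul_left] at htel
  rw [deriv_deriv_besselJ, deriv_besselJ, besselJ_eq_tsum]
  linear_combination htel

section NontriviallyNormedField

variable {𝕜 : Type*} [NontriviallyNormedField 𝕜]

lemma eq_add_sub_mul_dslope (f : 𝕜 → 𝕜) (a b : 𝕜) : f b = f a + (b - a) * dslope f a b := by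
  linear_combination -(sub_smul_dslope f a b)

lemma hasDerivAt_add_mul_sub_add_sub_sq_mul {u : 𝕜 → 𝕜} {u' : 𝕜} (a b c : 𝕜) {z : 𝕜}
    (hu : HasDerivAt u u' z) :
    HasDerivAt (fun y => a + b * (y - c) + (y - c) ^ 2 * u y)
      (b + (z - c) * (2 * u z + (z - c) * u')) z := by
  have hlin := (hasDerivAt_id z).sub_const c
  exact (((hlin.const_mul b).const_add a).add ((hlin.pow 2).mul hu)).congr_deriv (by simp; ring)

lemma eq_zero_of_forall_sub_mul_eq_zero {Q : 𝕜 → 𝕜} {c : 𝕜} (hQ : Continuous Q)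
    (h : ∀ z, (z - c) * Q z = 0) : Q c = 0 :=
  congrFun (hQ.ext_on (dense_compl_singleton c) continuous_const fun z hz =>
    (mul_eq_zero.mp (h z)).resolve_left (sub_ne_zero.mpr hz)) c

end NontriviallyNormedField

section NormedField

variable {𝕜 : Type*} [NormedField 𝕜]

lemma tendsto_of_tendsto_sub_div_sq {g : 𝕜 → 𝕜} {c L M : 𝕜}
    (h : Tendsto (fun z => (g z - L) / (z - c) ^ 2) (𝓝[≠] c) (𝓝 M)) :
    Tendsto g (𝓝[≠] c) (𝓝 L) := by
  have hsq : Tendsto (fun z => (z - c) ^ 2) (𝓝[≠] c) (𝓝 0) := by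
    refine Tendsto.mono_left ?_ nhdsWithin_le_nhds
    simpa using (by fun_prop : Continuous fun z => (z - c) ^ 2).tendsto c
  have := tendsto_const_nhds (x := L).add (hsq.mul h)
  rw [zero_mul, add_zero] at this
  refine this.congr' (eventually_nhdsWithin_of_forall fun z hz => ?_)
  have : z - c ≠ 0 := sub_ne_zero.mpr hz
  field_simp
  ring

lemma tendsto_sub_div_sq_of_expansion {F H u v : 𝕜 → 𝕜} {a α κ : 𝕜}
    (hu : Continuous u) (hv : Continuous v) (ha : a ≠ 0) (hrel : a + 2 * κ * α = 0)
    (hF : ∀ z, F z = a + 2 * α * (z - κ) + (z - κ) ^ 2 * u z)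
    (hH : ∀ z, H z = a + α * (z - κ) + (z - κ) ^ 2 * v z) :
    Tendsto (fun z => (z * F z ^ 2 / H z ^ 2 - κ) / (z - κ) ^ 2) (𝓝[≠] κ)
      (𝓝 ((3 * κ * α ^ 2 + 4 * a * α + 2 * κ * a * (u κ - v κ)) / a ^ 2)) := by
  set R : 𝕜 → 𝕜 := fun z => 3 * κ * α ^ 2 + 4 * a * α + 2 * κ * a * (u z - v z)
    + (z - κ) * (κ * α * (4 * u z - 2 * v z) + 4 * α ^ 2 + 2 * a * u z)
    + (z - κ) ^ 2 * (κ * (u z ^ 2 - v z ^ 2) + 4 * α * u z) + (z - κ) ^ 3 * u z ^ 2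
  -- the coefficient `a * (a + 2 * κ * α)` of `z - κ` vanishes by `hrel`
  have key : ∀ z, z * F z ^ 2 - κ * H z ^ 2 = (z - κ) ^ 2 * R z := fun z => by
    rw [hF, hH]
    linear_combination (z - κ) * a * hrel
  have hHc : Continuous H := by
    rw [show H = _ from funext hH]
    fun_prop
  have hHκ : H κ = a := by simp [hH]
  have hR : ContinuousAt (fun z => R z / H z ^ 2) κ :=
    (by fun_prop : Continuous R).continuousAt.div (hHc.continuousAt.pow 2) (by simp [hHκ, ha])
  have hRκ : R κ / H κ ^ 2 = (3 * κ * α ^ 2 + 4 * a * α + 2 * κ * a * (u κ - v κ)) / a ^ 2 := by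
    simp [R, hHκ]
  rw [← hRκ]
  refine hR.tendsto.mono_left nhdsWithin_le_nhds |>.congr' ?_
  filter_upwards [self_mem_nhdsWithin,
    nhdsWithin_le_nhds (hHc.continuousAt.eventually_ne (hHκ ▸ ha))] with z hz hHz
  have : z - κ ≠ 0 := sub_ne_zero.mpr hz
  field_simp
  linear_combination (key z).symm

end NormedField

lemma Differentiable.dslope {E : Type*} [NormedAddCommGroup E] [NormedSpace ℂ E]
    [CompleteSpace E] {f : ℂ → E} (hf : Differentiable ℂ f) (c : ℂ) :
    Differentiable ℂ (dslope f c) :=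
  differentiableOn_univ.mp ((differentiableOn_dslope univ_mem).mpr hf.differentiableOn)

lemma exists_cubic_expansion_of_apply_eq_zero {f : ℂ → ℂ} {κ : ℂ} (hf : Differentiable ℂ f)
    (h0 : f κ = 0) :
    ∃ (α : ℂ) (u v : ℂ → ℂ), Differentiable ℂ u ∧ Differentiable ℂ v ∧ u κ = 3 * v κ ∧
      (∀ z, f z = (z - κ) * (deriv f κ + α * (z - κ) + (z - κ) ^ 2 * v z)) ∧
      ∀ z, deriv f z = deriv f κ + 2 * α * (z - κ) + (z - κ) ^ 2 * u z := by
  set h₂ := dslope (dslope f κ) κ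
  have hd₂ : Differentiable ℂ h₂ := (hf.dslope κ).dslope κ
  have hf_eq : ∀ z, f z = deriv f κ * (z - κ) + (z - κ) ^ 2 * h₂ z := fun z => by
    have e₁ := sub_smul_dslope_of_zero h0 z
    have e₂ := eq_add_sub_mul_dslope (dslope f κ) κ z
    rw [smul_eq_mul] at e₁
    rw [dslope_same] at e₂
    linear_combination -e₁ + (z - κ) * e₂
  have hh₂ : ∀ z, h₂ z = h₂ κ + (z - κ) * dslope h₂ κ z := eq_add_sub_mul_dslope h₂ κ
  refine ⟨h₂ κ, fun z => 2 * dslope h₂ κ z + deriv h₂ z, dslope h₂ κ,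
    ((hd₂.dslope κ).const_mul 2).add hd₂.deriv, hd₂.dslope κ, ?_, fun z => ?_, fun z => ?_⟩
  · simp only [dslope_same]
    ring
  · rw [hf_eq, hh₂]
    ring
  · have hderiv : HasDerivAt f (deriv f κ + (z - κ) * (2 * h₂ z + (z - κ) * deriv h₂ z)) z :=
      (hasDerivAt_add_mul_sub_add_sub_sq_mul 0 (deriv f κ) κ
        (hd₂ z).hasDerivAt).congr_of_eventuallyEq (.of_forall fun y => by rw [hf_eq]; ring)
    linear_combination hderiv.deriv + 2 * (z - κ) * hh₂ z

theorem tendsto_sub_div_sq_of_bessel_ode {f : ℂ → ℂ} {c κ : ℂ} (hf : Differentiable ℂ f)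
    (hode : ∀ z, z ^ 2 * deriv (deriv f) z + z * deriv f z + (z ^ 2 - c) * f z = 0)
    (hκ : κ ≠ 0) (h0 : f κ = 0) (h1 : deriv f κ ≠ 0) :
    Tendsto (fun z => (z * deriv f z ^ 2 * (z - κ) ^ 2 / f z ^ 2 - κ) / (z - κ) ^ 2) (𝓝[≠] κ)
      (𝓝 ((1 + 8 * c - 8 * κ ^ 2) / (12 * κ))) := by
  obtain ⟨α, u, v, hu, hv, huv, hf_eq, hf'⟩ := exists_cubic_expansion_of_apply_eq_zero hf h0
  set a := deriv f κ
  have hf'' : ∀ z, deriv (deriv f) z = 2 * α + (z - κ) * (2 * u z + (z - κ) * deriv u z) :=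
    fun z => ((hasDerivAt_add_mul_sub_add_sub_sq_mul a (2 * α) κ
      (hu z).hasDerivAt).congr_of_eventuallyEq (.of_forall hf')).deriv
  have rel1 : a + 2 * κ * α = 0 := by
    have h := hode κ
    rw [hf'' κ, hf' κ, h0] at h
    exact mul_left_cancel₀ hκ (by linear_combination h)
  -- after `rel1` cancels its constant term, Bessel's equation reads `(z - κ) * Q z = 0` with
  -- `Q` continuous, so `Q κ = 0`
  have rel2 : 6 * κ * α + 2 * κ ^ 2 * u κ + a + (κ ^ 2 - c) * a = 0 := by
    have hQ : ∀ z, (z - κ) * (4 * α * κ + 2 * α * (z - κ)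
        + z ^ 2 * (2 * u z + (z - κ) * deriv u z) + a + z * (2 * α + (z - κ) * u z)
        + (z ^ 2 - c) * (a + α * (z - κ) + (z - κ) ^ 2 * v z)) = 0 := fun z => by
      have h := hode z
      rw [hf'' z, hf' z, hf_eq z] at h
      linear_combination h - κ * rel1
    have hu_cont := hu.continuous
    have hu'_cont := hu.deriv.continuous
    have hv_cont := hv.continuous
    linear_combination eq_zero_of_forall_sub_mul_eq_zero (by fun_prop) hQ
  have hval : (3 * κ * α ^ 2 + 4 * a * α + 2 * κ * a * (u κ - v κ)) / a ^ 2
      = (1 + 8 * c - 8 * κ ^ 2) / (12 * κ) := by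
    rw [huv] at rel2 ⊢
    field_simp
    linear_combination 8 * a * rel2 + 9 * (2 * κ * α - a) * rel1
  rw [← hval]
  refine (tendsto_sub_div_sq_of_expansion hu.continuous hv.continuous h1 rel1 hf'
    (fun z => rfl)).congr' (eventually_nhdsWithin_of_forall fun z hz => ?_)
  have hw : (z - κ) ^ 2 ≠ 0 := pow_ne_zero 2 (sub_ne_zero.mpr hz)
  dsimp only
  rw [hf_eq z, mul_pow, ← div_div, mul_div_cancel_right₀ _ hw]

/-- local behavior of `g_p` around a zero `κ*` of `J_p`. -/
theorem stmt_10 (p : ℕ) (κs : ℝ) (hκs : 0 < κs)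
    (hJ : besselJ p (κs : ℂ) = 0) (hJ' : besselJ' p (κs : ℂ) ≠ 0) :
    Filter.Tendsto
        (fun κ : ℂ => κ * (besselJ' p κ) ^ 2 * (κ - (κs : ℂ)) ^ 2 / (besselJ p κ) ^ 2)
        (nhdsWithin (κs : ℂ) {(κs : ℂ)}ᶜ) (nhds (κs : ℂ)) ∧
    Filter.Tendsto
        (fun κ : ℂ =>
          (κ * (besselJ' p κ) ^ 2 * (κ - (κs : ℂ)) ^ 2 / (besselJ p κ) ^ 2 - (κs : ℂ))
            / (κ - (κs : ℂ)) ^ 2)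
        (nhdsWithin (κs : ℂ) {(κs : ℂ)}ᶜ)
        (nhds (((-8 * κs ^ 2 + 8 * (p : ℝ) ^ 2 + 1) / (12 * κs) : ℝ) : ℂ)) := by
  have hlim := tendsto_sub_div_sq_of_bessel_ode (differentiable_besselJ p) (besselJ_ode p)
    (ofReal_ne_zero.mpr hκs.ne') hJ hJ'
  have hval : (((-8 * κs ^ 2 + 8 * (p : ℝ) ^ 2 + 1) / (12 * κs) : ℝ) : ℂ)
      = (1 + 8 * (p : ℂ) ^ 2 - 8 * (κs : ℂ) ^ 2) / (12 * κs) := by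
    push_cast
    ring
  rw [hval]
  exact ⟨tendsto_of_tendsto_sub_div_sq hlim, hlim⟩
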